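/- arXiv:1907.07158 — 4 statements merged into one kernel-verified Lean document; each statement's English description precedes it below -/
import Mathlib

section
/- Let I be a real random variable with Gaussian density f_I(x) = (1/√(2π))·exp(−(x − I_d)²/2), and let g(x) = (η_c/K_c)·x² for 0 < x < K_c and g(x) = η_c·x for x ≥ K_c. Then: (i) for every p with 0 < p < η_c·K_c, P(I > 0 and g(I) ≤ p) = (1/2)·(erf(I_d/√2) − erf((I_d − √(K_c·p/η_c))/√2)); and (ii) for every p ≥ η_c·K_c, P(K_c < I ≤ p/η_c) = (1/2)·(erf((I_d − K_c)/√2) + erf((p − I_d·η_c)/(√2·η_c))). (CDF of the harvested solar power.) -/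
open MeasureTheory Real

/-- Gaussian density with mean `Id` and unit variance. -/
noncomputable def gaussianDensity (Id x : ℝ) : ℝ :=
  (1 / Real.sqrt (2 * Real.pi)) * Real.exp (-(x - Id) ^ 2 / 2)

/-- The error function `erf(x) = (2/√π)·∫₀ˣ e^{−t²} dt`. -/
noncomputable def erf (x : ℝ) : ℝ :=
  (2 / Real.sqrt Real.pi) * ∫ t in (0 : ℝ)..x, Real.exp (-t ^ 2)

lemma erf_neg (x : ℝ) : erf (-x) = -erf x := by
  unfold erf
  have h : ∫ t in (0:ℝ)..(-x), Real.exp (-t ^ 2)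
      = ∫ t in (0:ℝ)..(-x), Real.exp (-(-t) ^ 2) := by simp
  rw [h, intervalIntegral.integral_comp_neg (fun t => Real.exp (-t ^ 2)),
    intervalIntegral.integral_symm]
  simp

lemma erf_sub (c d : ℝ) :
    erf d - erf c = (2 / Real.sqrt Real.pi) * ∫ t in c..d, Real.exp (-t ^ 2) := by
  unfold erf
  have hint : ∀ a b : ℝ, IntervalIntegrable (fun t => Real.exp (-t ^ 2)) volume a b :=
    fun a b => (Continuous.intervalIntegrable (by continuity) a b)
  have h : ∫ t in c..d, Real.exp (-t ^ 2)
      = (∫ t in (0:ℝ)..d, Real.exp (-t ^ 2)) - ∫ t in (0:ℝ)..c, Real.exp (-t ^ 2) := by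
    rw [← intervalIntegral.integral_add_adjacent_intervals (hint c 0) (hint 0 d),
      intervalIntegral.integral_symm 0 c]
    ring
  rw [h]; ring

lemma gauss_integral (Id a b : ℝ) :
    ∫ x in a..b, gaussianDensity Id x
      = (1/2) * (erf ((b - Id) / Real.sqrt 2) - erf ((a - Id) / Real.sqrt 2)) := by
  unfold gaussianDensity
  rw [intervalIntegral.integral_const_mul]
  have h1 : ∫ x in a..b, Real.exp (-(x - Id) ^ 2 / 2)
      = ∫ u in (a - Id)..(b - Id), Real.exp (-u ^ 2 / 2) :=
    intervalIntegral.integral_comp_sub_right (fun u => Real.exp (-u ^ 2 / 2)) Id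
  have h2 : (fun u : ℝ => Real.exp (-u ^ 2 / 2))
      = fun u : ℝ => Real.exp (-(u / Real.sqrt 2) ^ 2) := by
    funext u
    congr 1
    rw [div_pow, Real.sq_sqrt (by norm_num : (0:ℝ) ≤ 2)]
    ring
  rw [h1, h2, intervalIntegral.integral_comp_div (fun t => Real.exp (-t ^ 2))
    (by positivity : Real.sqrt 2 ≠ 0)]
  rw [erf_sub]
  have hpi : Real.sqrt (2 * Real.pi) = Real.sqrt 2 * Real.sqrt Real.pi :=
    Real.sqrt_mul (by norm_num) _
  have h2pos : (0:ℝ) < Real.sqrt 2 := by positivity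
  have hppos : (0:ℝ) < Real.sqrt Real.pi := Real.sqrt_pos.mpr Real.pi_pos
  rw [hpi, smul_eq_mul]
  field_simp

lemma gauss_prob {Ω : Type*} [MeasurableSpace Ω] (μ : Measure Ω)
    (Id : ℝ) (I : Ω → ℝ) (hI : Measurable I)
    (hlaw : μ.map I = volume.withDensity fun x => ENNReal.ofReal (gaussianDensity Id x))
    (a b : ℝ) (hab : a ≤ b) :
    (μ {ω | a < I ω ∧ I ω ≤ b}).toReal
      = (1/2) * (erf ((b - Id) / Real.sqrt 2) - erf ((a - Id) / Real.sqrt 2)) := by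
  have hset : {ω | a < I ω ∧ I ω ≤ b} = I ⁻¹' Set.Ioc a b := rfl
  have hcont : Continuous (gaussianDensity Id) := by
    unfold gaussianDensity; continuity
  have hInt : IntegrableOn (gaussianDensity Id) (Set.Ioc a b) volume :=
    (hcont.integrableOn_Icc).mono_set Set.Ioc_subset_Icc_self
  have hμ : μ {ω | a < I ω ∧ I ω ≤ b}
      = ENNReal.ofReal (∫ x in Set.Ioc a b, gaussianDensity Id x) := by
    rw [hset, ← Measure.map_apply hI measurableSet_Ioc, hlaw,
      withDensity_apply _ measurableSet_Ioc,
      ← ofReal_integral_eq_lintegral_ofReal hInt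
        (Filter.Eventually.of_forall fun x => by unfold gaussianDensity; positivity)]
  rw [hμ, ENNReal.toReal_ofReal, ← intervalIntegral.integral_of_le hab, gauss_integral]
  exact setIntegral_nonneg measurableSet_Ioc fun x _ => by
    unfold gaussianDensity; positivity

/-- **CDF of the harvested solar power.**
(i) For `0 < p < η_c·K_c`,
`P(I > 0 ∧ g(I) ≤ p) = (1/2)·(erf(I_d/√2) − erf((I_d − √(K_c·p/η_c))/√2))`;
(ii) for `p ≥ η_c·K_c`,
`P(K_c < I ≤ p/η_c) = (1/2)·(erf((I_d − K_c)/√2) + erf((p − I_d·η_c)/(√2·η_c)))`. -/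
theorem solar_power_cdf
    {Ω : Type*} [MeasurableSpace Ω] (μ : Measure Ω) [IsProbabilityMeasure μ]
    (Id ηc Kc : ℝ) (hId : 0 < Id) (hηc : 0 < ηc) (hKc : 0 < Kc)
    (I : Ω → ℝ) (hI : Measurable I)
    (hlaw : μ.map I = volume.withDensity fun x => ENNReal.ofReal (gaussianDensity Id x))
    (g : ℝ → ℝ)
    (hg₁ : ∀ x : ℝ, 0 < x → x < Kc → g x = (ηc / Kc) * x ^ 2)
    (hg₂ : ∀ x : ℝ, Kc ≤ x → g x = ηc * x) :
    (∀ p : ℝ, 0 < p → p < ηc * Kc →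
      (μ {ω | 0 < I ω ∧ g (I ω) ≤ p}).toReal =
        (1 / 2) * (erf (Id / Real.sqrt 2)
          - erf ((Id - Real.sqrt (Kc * p / ηc)) / Real.sqrt 2))) ∧
    (∀ p : ℝ, ηc * Kc ≤ p →
      (μ {ω | Kc < I ω ∧ I ω ≤ p / ηc}).toReal =
        (1 / 2) * (erf ((Id - Kc) / Real.sqrt 2)
          + erf ((p - Id * ηc) / (Real.sqrt 2 * ηc)))) := by
  constructor
  · intro p hp0 hp1
    set s := Real.sqrt (Kc * p / ηc) with hs
    have hspos : 0 < s := Real.sqrt_pos.mpr (by positivity)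
    have hs2 : s ^ 2 = Kc * p / ηc := Real.sq_sqrt (by positivity)
    have hsK : s < Kc := by
      have h1 : Kc * p / ηc < Kc ^ 2 := by
        rw [div_lt_iff₀ hηc]
        nlinarith
      calc s < Real.sqrt (Kc ^ 2) := Real.sqrt_lt_sqrt (by positivity) h1
        _ = Kc := by rw [Real.sqrt_sq hKc.le]
    have hset : {ω | 0 < I ω ∧ g (I ω) ≤ p} = {ω | 0 < I ω ∧ I ω ≤ s} := by
      ext ω
      simp only [Set.mem_setOf_eq]
      constructor
      · rintro ⟨hx, hgx⟩
        refine ⟨hx, ?_⟩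
        by_cases hxK : I ω < Kc
        · rw [hg₁ _ hx hxK] at hgx
          have hx2 : I ω ^ 2 ≤ s ^ 2 := by
            rw [hs2]
            rw [div_mul_eq_mul_div, div_le_iff₀ hKc] at hgx
            rw [le_div_iff₀ hηc]
            nlinarith
          nlinarith
        · push_neg at hxK
          rw [hg₂ _ hxK] at hgx
          have : ηc * Kc ≤ ηc * I ω := by nlinarith
          linarith
      · rintro ⟨hx, hxs⟩
        have hxK : I ω < Kc := lt_of_le_of_lt hxs hsK
        refine ⟨hx, ?_⟩
        rw [hg₁ _ hx hxK]
        have hx2 : I ω ^ 2 ≤ s ^ 2 := pow_le_pow_left₀ hx.le hxs 2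
        have : (ηc / Kc) * s ^ 2 = p := by
          rw [hs2]; field_simp
        nlinarith [div_pos hηc hKc]
    rw [hset, gauss_prob μ Id I hI hlaw 0 s hspos.le]
    have e1 : (s - Id) / Real.sqrt 2 = -((Id - s) / Real.sqrt 2) := by ring
    have e2 : (0 - Id) / Real.sqrt 2 = -(Id / Real.sqrt 2) := by ring
    rw [e1, e2, erf_neg, erf_neg]
    ring
  · intro p hp
    have hab : Kc ≤ p / ηc := by
      rw [le_div_iff₀ hηc]
      nlinarith
    rw [gauss_prob μ Id I hI hlaw Kc (p / ηc) hab]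
    have e1 : (Kc - Id) / Real.sqrt 2 = -((Id - Kc) / Real.sqrt 2) := by ring
    have e2 : (p / ηc - Id) / Real.sqrt 2 = (p - Id * ηc) / (Real.sqrt 2 * ηc) := by
      have h2 : Real.sqrt 2 ≠ 0 := by positivity
      field_simp
    rw [e1, e2, erf_neg]
    ring
end

section
/- Let V be a Weibull random variable with scale c > 0 and shape k > 0, let a > 0, and let 0 < V_ci < V_r. Then for all p₁, p₂ with a·V_ci³ < p₁ < p₂ ≤ a·V_r³, the probability P(p₁ < a·V³ ≤ p₂ and V_ci < V ≤ V_r) equals ∫_{p₁}^{p₂} (k/(3·c^k·a^{k/3}))·p^{k/3 − 1}·exp(−p^{k/3}/(a^{k/3}·c^k)) dp. (Continuous part of the distribution of the harvested wind power, Theorem 2.) -/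
/-!
If `V` is Weibull with scale `c` and shape `k`, then `a V³` is Weibull with scale `a c³` and
shape `k / 3`, and the integrand on the right is exactly its density. Since `v ↦ a v³` is
strictly increasing, the event is `V ∈ (v₁, v₂]` with `pᵢ = a vᵢ³`, so both sides are
differences of Weibull survival functions, which agree under the substitution `p = a v³`.
-/

open MeasureTheory Real

/-- Weibull density with scale `c > 0` and shape `k > 0` (zero for `v ≤ 0`). -/
noncomputable def weibullDensity (c k v : ℝ) : ℝ :=
  if 0 < v then (k / c) * (v / c) ^ (k - 1) * Real.exp (-(v / c) ^ k) else 0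

open Set

theorem toReal_withDensity_ofReal_Ioc {f : ℝ → ℝ} (hf : 0 ≤ f) (hfm : Measurable f)
    {a b : ℝ} (hab : a ≤ b) :
    (volume.withDensity (fun x ↦ ENNReal.ofReal (f x)) (Ioc a b)).toReal = ∫ x in a..b, f x := by
  rw [withDensity_apply _ measurableSet_Ioc, intervalIntegral.integral_of_le hab,
    integral_eq_lintegral_of_nonneg_ae (ae_of_all _ hf) hfm.aestronglyMeasurable]

theorem exists_mul_pow_three_eq {a p : ℝ} (ha : 0 < a) (hp : 0 ≤ p) : ∃ v, a * v ^ 3 = p :=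
  ⟨(p / a) ^ ((3 : ℕ)⁻¹ : ℝ), by
    rw [rpow_inv_natCast_pow (div_nonneg hp ha.le) three_ne_zero, mul_div_cancel₀ _ ha.ne']⟩

theorem strictMono_mul_pow_three {a : ℝ} (ha : 0 < a) : StrictMono fun v : ℝ ↦ a * v ^ 3 :=
  (Odd.strictMono_pow (by decide)).const_mul ha

noncomputable def weibullSurvival (c k v : ℝ) : ℝ := exp (-(v / c) ^ k)

theorem weibullDensity_nonneg {c k : ℝ} (hc : 0 ≤ c) (hk : 0 ≤ k) (v : ℝ) :
    0 ≤ weibullDensity c k v := by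
  unfold weibullDensity
  split_ifs <;> positivity

theorem measurable_weibullDensity (c k : ℝ) : Measurable (weibullDensity c k) :=
  Measurable.ite measurableSet_Ioi (by fun_prop) measurable_const

theorem hasDerivAt_weibullSurvival {c : ℝ} (k : ℝ) (hc : c ≠ 0) {v : ℝ} (hv : 0 < v) :
    HasDerivAt (weibullSurvival c k) (-weibullDensity c k v) v := by
  have hvc : v / c ≠ 0 := div_ne_zero hv.ne' hc
  have h : HasDerivAt (weibullSurvival c k)
      (exp (-(v / c) ^ k) * -(1 / c * k * (v / c) ^ (k - 1))) v :=
    (((hasDerivAt_id' v).div_const c).rpow_const (p := k) (Or.inl hvc)).neg.exp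
  rw [weibullDensity, if_pos hv]
  exact h.congr_deriv (by ring)

theorem continuousOn_weibullDensity {c : ℝ} (k : ℝ) (hc : c ≠ 0) :
    ContinuousOn (weibullDensity c k) (Ioi 0) := by
  refine ContinuousOn.congr (f := fun v ↦ (k / c) * (v / c) ^ (k - 1) * exp (-(v / c) ^ k))
    ?_ fun v hv ↦ if_pos hv
  intro v hv
  have hvc : v / c ≠ 0 := div_ne_zero (ne_of_gt hv) hc
  fun_prop (disch := exact Or.inl hvc)

theorem integral_weibullDensity {c : ℝ} (k : ℝ) (hc : c ≠ 0) {v₁ v₂ : ℝ} (hv₁ : 0 < v₁)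
    (hv₂ : 0 < v₂) :
    ∫ v in v₁..v₂, weibullDensity c k v = weibullSurvival c k v₁ - weibullSurvival c k v₂ := by
  have hpos : uIcc v₁ v₂ ⊆ Ioi 0 := fun v hv ↦ lt_of_lt_of_le (lt_min hv₁ hv₂) hv.1
  rw [intervalIntegral.integral_eq_sub_of_hasDerivAt
    (fun v hv ↦ by simpa using (hasDerivAt_weibullSurvival k hc (hpos hv)).neg)
    ((continuousOn_weibullDensity k hc).mono hpos).intervalIntegrable, Pi.neg_apply,
    Pi.neg_apply]
  ring

theorem weibullSurvival_mul_pow_three {a c : ℝ} (k : ℝ) (ha : 0 < a) (hc : 0 < c) {v : ℝ}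
    (hv : 0 ≤ v) : weibullSurvival (a * c ^ 3) (k / 3) (a * v ^ 3) = weibullSurvival c k v := by
  have : a * v ^ 3 / (a * c ^ 3) = (v / c) ^ 3 := by field_simp
  rw [weibullSurvival, weibullSurvival, this, ← rpow_natCast_mul (by positivity)]
  norm_num [mul_div_cancel₀]

theorem weibullDensity_mul_pow_three {a c : ℝ} (k : ℝ) (ha : 0 < a) (hc : 0 < c) {p : ℝ}
    (hp : 0 < p) :
    weibullDensity (a * c ^ 3) (k / 3) p =
      k / (3 * c ^ k * a ^ (k / 3)) * p ^ (k / 3 - 1)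
        * exp (-p ^ (k / 3) / (a ^ (k / 3) * c ^ k)) := by
  have hscale : (a * c ^ 3) ^ (k / 3) = a ^ (k / 3) * c ^ k := by
    rw [mul_rpow ha.le (by positivity), ← rpow_natCast_mul hc.le]
    norm_num [mul_div_cancel₀]
  rw [weibullDensity, if_pos hp, div_rpow hp.le (by positivity), div_rpow hp.le (by positivity),
    rpow_sub_one hp.ne', rpow_sub_one (by positivity), hscale, neg_div]
  field_simp

theorem wind_power_density_general
    {Ω : Type*} [MeasurableSpace Ω] (μ : Measure Ω)
    (c k a Vci Vr : ℝ) (hc : 0 < c) (hk : 0 < k) (ha : 0 < a)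
    (hVci : 0 < Vci)
    (V : Ω → ℝ) (hV : Measurable V)
    (hlaw : μ.map V = volume.withDensity fun v => ENNReal.ofReal (weibullDensity c k v)) :
    ∀ p₁ p₂ : ℝ, a * Vci ^ 3 < p₁ → p₁ < p₂ → p₂ ≤ a * Vr ^ 3 →
      (μ {ω | p₁ < a * V ω ^ 3 ∧ a * V ω ^ 3 ≤ p₂ ∧ Vci < V ω ∧ V ω ≤ Vr}).toReal =
        ∫ p in p₁..p₂,
          (k / (3 * c ^ k * a ^ (k / 3))) * p ^ (k / 3 - 1)
            * Real.exp (-p ^ (k / 3) / (a ^ (k / 3) * c ^ k)) := by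
  intro p₁ p₂ h₁ h₁₂ h₂
  have hcube := strictMono_mul_pow_three ha
  have hp₁ : 0 < p₁ := lt_trans (by positivity) h₁
  obtain ⟨v₁, rfl⟩ := exists_mul_pow_three_eq ha hp₁.le
  obtain ⟨v₂, rfl⟩ := exists_mul_pow_three_eq ha (hp₁.trans h₁₂).le
  rw [hcube.lt_iff_lt] at h₁ h₁₂
  rw [hcube.le_iff_le] at h₂
  have hv₁ : 0 < v₁ := hVci.trans h₁
  have hv₂ : 0 < v₂ := hv₁.trans h₁₂
  have hset :
      {ω | a * v₁ ^ 3 < a * V ω ^ 3 ∧ a * V ω ^ 3 ≤ a * v₂ ^ 3 ∧ Vci < V ω ∧ V ω ≤ Vr} =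
        V ⁻¹' Ioc v₁ v₂ := by
    ext ω
    simp only [mem_ofPred_eq, mem_preimage, mem_Ioc, hcube.lt_iff_lt, hcube.le_iff_le]
    exact ⟨fun h ↦ ⟨h.1, h.2.1⟩, fun h ↦ ⟨h.1, h.2, h₁.trans h.1, h.2.trans h₂⟩⟩
  have hdensity : EqOn (fun p ↦ weibullDensity (a * c ^ 3) (k / 3) p)
      (fun p ↦ k / (3 * c ^ k * a ^ (k / 3)) * p ^ (k / 3 - 1)
        * exp (-p ^ (k / 3) / (a ^ (k / 3) * c ^ k))) (uIcc (a * v₁ ^ 3) (a * v₂ ^ 3)) :=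
    fun p hp ↦ weibullDensity_mul_pow_three k ha hc
      (lt_of_lt_of_le (lt_min (by positivity) (by positivity)) hp.1)
  rw [hset, ← Measure.map_apply hV measurableSet_Ioc, hlaw,
    toReal_withDensity_ofReal_Ioc (weibullDensity_nonneg hc.le hk.le)
      (measurable_weibullDensity c k) h₁₂.le, ← intervalIntegral.integral_congr hdensity,
    integral_weibullDensity k hc.ne' hv₁ hv₂, integral_weibullDensity _ (by positivity)
      (by positivity) (by positivity), weibullSurvival_mul_pow_three k ha hc hv₁.le,
    weibullSurvival_mul_pow_three k ha hc hv₂.le]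

/-- **Theorem 2 (continuous part of the distribution of the harvested wind power).**
If `V` is Weibull with scale `c` and shape `k`, then for all
`a·V_ci³ < p₁ < p₂ ≤ a·V_r³`, the probability
`P(p₁ < a·V³ ≤ p₂ ∧ V_ci < V ≤ V_r)` equals
`∫_{p₁}^{p₂} (k/(3·c^k·a^{k/3}))·p^{k/3−1}·exp(−p^{k/3}/(a^{k/3}·c^k)) dp`. -/
theorem wind_power_density
    {Ω : Type*} [MeasurableSpace Ω] (μ : Measure Ω) [IsProbabilityMeasure μ]
    (c k a Vci Vr : ℝ) (hc : 0 < c) (hk : 0 < k) (ha : 0 < a)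
    (hVci : 0 < Vci) (hVr : Vci < Vr)
    (V : Ω → ℝ) (hV : Measurable V)
    (hlaw : μ.map V = volume.withDensity fun v => ENNReal.ofReal (weibullDensity c k v)) :
    ∀ p₁ p₂ : ℝ, a * Vci ^ 3 < p₁ → p₁ < p₂ → p₂ ≤ a * Vr ^ 3 →
      (μ {ω | p₁ < a * V ω ^ 3 ∧ a * V ω ^ 3 ≤ p₂ ∧ Vci < V ω ∧ V ω ≤ Vr}).toReal =
        ∫ p in p₁..p₂,
          (k / (3 * c ^ k * a ^ (k / 3))) * p ^ (k / 3 - 1)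
            * Real.exp (-p ^ (k / 3) / (a ^ (k / 3) * c ^ k)) :=
  wind_power_density_general μ c k a Vci Vr hc hk ha hVci V hV hlaw
end

section
/- Let a, c > 0, let k > 3, and let s ≥ 0. Then (k/(3·a^{k/3}·c^k))·∫₀^{∞} exp(−s·p)·p^{k/3 − 1}·exp(−p^{k/3}/(a^{k/3}·c^k)) dp = Σ_{n=0}^{∞} ((−s·a·c³)^n/n!)·Γ(3n/k + 1), where the series on the right converges absolutely. (Laplace transform of the harvested wind power, Theorem 3(b).) -/
open MeasureTheory Real

/-! Expanding `exp (-s p)` into its power series and integrating termwise against the Weibull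
density `p ^ (r - 1) * exp (-p ^ r / β)` produces its moments
`β ^ (n / r + 1) / r * Γ(n / r + 1)`. Termwise integration is justified by absolute convergence:
log-convexity of `Γ` gives `Γ(n / r + 1) ≤ (n!) ^ (1 / r)`, so for `r > 1` the terms are dominated
by `l ^ n / (n!) ^ (1 - 1 / r)`, which decays faster than any geometric sequence. -/

theorem Real.Gamma_mul_nat_add_one_le_factorial_rpow {α : ℝ} (hα0 : 0 < α) (hα1 : α < 1)
    (n : ℕ) : Gamma (α * n + 1) ≤ (n.factorial : ℝ) ^ α := by
  have h := Gamma_mul_add_mul_le_rpow_Gamma_mul_rpow_Gamma (s := n + 1) (t := 1)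
    (by positivity) one_pos hα0 (sub_pos.2 hα1) (add_sub_cancel α 1)
  rwa [Gamma_one, one_rpow, mul_one, mul_one, Gamma_nat_eq_factorial,
    show α * (n + 1) + (1 - α) = α * n + 1 by ring] at h

theorem summable_pow_div_factorial_rpow {l β : ℝ} (hl : 0 ≤ l) (hβ : 0 < β) :
    Summable fun n : ℕ => l ^ n / (n.factorial : ℝ) ^ β := by
  -- `M ^ n / n! ≤ exp M` with `M ^ β = l + 1` makes the terms geometric with ratio `l / (l + 1)`.
  set M := (l + 1) ^ β⁻¹
  have hM : 0 < M := by positivity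
  have hMβ : M ^ β = l + 1 := by
    rw [← rpow_mul (by positivity), inv_mul_cancel₀ hβ.ne', rpow_one]
  have hgeom : Summable fun n : ℕ => exp (M * β) * (l / (l + 1)) ^ n :=
    (summable_geometric_of_lt_one (by positivity)
      ((div_lt_one (by linarith)).2 (by linarith))).mul_left _
  refine hgeom.of_nonneg_of_le (fun n => by positivity) fun n => ?_
  have hfact : M ^ n * exp (-M) ≤ n.factorial := by
    have := pow_div_factorial_le_exp M hM.le n
    rw [div_le_iff₀ (by positivity)] at this
    rw [exp_neg, ← div_eq_mul_inv, div_le_iff₀ (exp_pos _)]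
    linarith
  calc l ^ n / (n.factorial : ℝ) ^ β ≤ l ^ n / (M ^ n * exp (-M)) ^ β := by
        gcongr
    _ = exp (M * β) * (l / (l + 1)) ^ n := by
        rw [mul_rpow (by positivity) (exp_pos _).le, ← rpow_natCast M, ← rpow_mul hM.le,
          mul_comm (n : ℝ), rpow_mul hM.le, hMβ, ← exp_mul, rpow_natCast, div_pow, neg_mul, exp_neg]
        field_simp

theorem summable_pow_div_factorial_mul_Gamma {l α : ℝ} (hl : 0 ≤ l) (hα0 : 0 < α)
    (hα1 : α < 1) :
    Summable fun n : ℕ => l ^ n / n.factorial * Gamma (α * n + 1) := by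
  refine (summable_pow_div_factorial_rpow hl (sub_pos.2 hα1)).of_nonneg_of_le
    (fun n => mul_nonneg (by positivity) (Gamma_pos_of_pos (by positivity)).le) fun n => ?_
  have hfact : (0 : ℝ) < n.factorial := by positivity
  calc l ^ n / n.factorial * Gamma (α * n + 1)
      ≤ l ^ n / n.factorial * (n.factorial : ℝ) ^ α := by
        gcongr; exact Gamma_mul_nat_add_one_le_factorial_rpow hα0 hα1 n
    _ = l ^ n / (n.factorial : ℝ) ^ (1 - α) := by
        rw [rpow_sub hfact, rpow_one]; field_simp

theorem integral_exp_neg_mul_mul_eq_tsum_moment {μ : Measure ℝ} {w : ℝ → ℝ} (s : ℝ)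
    (hint : ∀ n : ℕ, Integrable (fun p => p ^ n * w p) μ)
    (hsum : Summable fun n : ℕ => |s| ^ n / n.factorial * ∫ p, ‖p ^ n * w p‖ ∂μ) :
    ∫ p, exp (-(s * p)) * w p ∂μ
      = ∑' n : ℕ, (-s) ^ n / n.factorial * ∫ p, p ^ n * w p ∂μ := by
  have hexp (p : ℝ) :
      exp (-(s * p)) * w p = ∑' n : ℕ, (-s) ^ n / n.factorial * (p ^ n * w p) := by
    rw [exp_eq_exp_ℝ, NormedSpace.exp_eq_tsum_div, ← tsum_mul_right]
    refine tsum_congr fun n => ?_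
    rw [neg_mul_eq_neg_mul, mul_pow]
    ring
  simp_rw [hexp, ← integral_const_mul]
  refine (integral_tsum_of_summable_integral_norm (fun n => (hint n).const_mul _) ?_).symm
  refine hsum.congr fun n => ?_
  simp_rw [norm_mul, ← integral_const_mul, norm_div, norm_pow, norm_neg, Real.norm_natCast,
    Real.norm_eq_abs]

section Weibull

variable {r β : ℝ}

theorem pow_mul_rpow_mul_exp_neg_rpow_div_eq {p : ℝ} (hp : 0 < p) (n : ℕ) :
    p ^ n * (p ^ (r - 1) * exp (-p ^ r / β))
      = p ^ ((n : ℝ) + r - 1) * exp (-β⁻¹ * p ^ r) := by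
  rw [← mul_assoc, ← rpow_natCast, ← rpow_add hp, add_sub_assoc, neg_div, div_eq_inv_mul,
    neg_mul]

theorem integrableOn_pow_mul_rpow_mul_exp_neg_rpow_div (hr : 0 < r) (hβ : 0 < β) (n : ℕ) :
    IntegrableOn (fun p => p ^ n * (p ^ (r - 1) * exp (-p ^ r / β))) (Set.Ioi 0) := by
  refine (integrableOn_rpow_mul_exp_neg_mul_rpow (s := n + r - 1)
    (by linarith [(n.cast_nonneg : (0 : ℝ) ≤ n)])
    hr (inv_pos.2 hβ)).congr_fun (fun p hp => ?_) measurableSet_Ioi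
  exact (pow_mul_rpow_mul_exp_neg_rpow_div_eq hp n).symm

theorem integral_pow_mul_rpow_mul_exp_neg_rpow_div (hr : 0 < r) (hβ : 0 < β) (n : ℕ) :
    ∫ p in Set.Ioi 0, p ^ n * (p ^ (r - 1) * exp (-p ^ r / β))
      = β ^ (n / r + 1) / r * Gamma (n / r + 1) := by
  rw [setIntegral_congr_fun measurableSet_Ioi
      fun p hp => pow_mul_rpow_mul_exp_neg_rpow_div_eq hp n,
    integral_rpow_mul_exp_neg_mul_rpow hr (by linarith [(n.cast_nonneg : (0 : ℝ) ≤ n)])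
      (inv_pos.2 hβ),
    inv_rpow hβ.le, ← rpow_neg hβ.le, neg_div, neg_neg,
    show ((n : ℝ) + r - 1 + 1) / r = n / r + 1 by field_simp; ring]
  ring

theorem integral_exp_neg_mul_mul_rpow_mul_exp_neg_rpow_div (hr : 1 < r) (hβ : 0 < β) (s : ℝ) :
    ∫ p in Set.Ioi 0, exp (-(s * p)) * p ^ (r - 1) * exp (-p ^ r / β)
      = ∑' n : ℕ, (-s) ^ n / n.factorial * (β ^ (n / r + 1) / r * Gamma (n / r + 1)) := by
  have hr0 : 0 < r := by linarith
  simp_rw [mul_assoc, ← integral_pow_mul_rpow_mul_exp_neg_rpow_div hr0 hβ]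
  refine integral_exp_neg_mul_mul_eq_tsum_moment s
    (integrableOn_pow_mul_rpow_mul_exp_neg_rpow_div hr0 hβ) ?_
  have hnorm (n : ℕ) : ∫ p in Set.Ioi 0, ‖p ^ n * (p ^ (r - 1) * exp (-p ^ r / β))‖
      = β ^ (n / r + 1) / r * Gamma (n / r + 1) := by
    rw [← integral_pow_mul_rpow_mul_exp_neg_rpow_div hr0 hβ]
    refine setIntegral_congr_fun measurableSet_Ioi fun p (hp : 0 < p) => ?_
    exact Real.norm_of_nonneg (by positivity)
  refine ((summable_pow_div_factorial_mul_Gamma (l := |s| * β ^ r⁻¹) (by positivity)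
    (inv_pos.2 hr0) (inv_lt_one_of_one_lt₀ hr)).mul_left (β / r)).congr fun n => ?_
  rw [hnorm, rpow_add hβ, rpow_one, div_eq_mul_inv (n : ℝ) r, mul_comm (n : ℝ),
    rpow_mul hβ.le, rpow_natCast, mul_pow]
  ring

end Weibull

theorem wind_power_laplace_transform_general
    (a c k s : ℝ) (ha : 0 < a) (hc : 0 < c) (hk : 3 < k) :
    Summable (fun n : ℕ =>
      |(-(s * a * c ^ 3)) ^ n / (n.factorial : ℝ) * Real.Gamma (3 * n / k + 1)|) ∧
    (k / (3 * a ^ (k / 3) * c ^ k))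
        * ∫ p in Set.Ioi (0 : ℝ),
            Real.exp (-(s * p)) * p ^ (k / 3 - 1)
              * Real.exp (-p ^ (k / 3) / (a ^ (k / 3) * c ^ k)) =
      ∑' n : ℕ, (-(s * a * c ^ 3)) ^ n / (n.factorial : ℝ) * Real.Gamma (3 * n / k + 1) := by
  have hk0 : 0 < k := by linarith
  have hb : 0 < a ^ (k / 3) * c ^ k := by positivity
  have hscale : (a ^ (k / 3) * c ^ k) ^ (3 / k) = a * c ^ 3 := by
    rw [mul_rpow (by positivity) (by positivity), ← rpow_mul ha.le, ← rpow_mul hc.le,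
      div_mul_div_cancel₀' hk0.ne', div_self three_ne_zero, rpow_one, mul_div_cancel₀ _ hk0.ne']
    norm_num
  refine ⟨?_, ?_⟩
  · refine (summable_pow_div_factorial_mul_Gamma (abs_nonneg (s * a * c ^ 3))
      (by positivity) ((div_lt_one hk0).2 hk)).congr fun n => ?_
    have hΓ : 0 < Gamma (3 * n / k + 1) := Gamma_pos_of_pos (by positivity)
    rw [abs_mul _ (Gamma _), abs_of_pos hΓ, abs_div, abs_pow, abs_neg, Nat.abs_cast,
      mul_div_right_comm 3]
  · rw [mul_assoc 3, integral_exp_neg_mul_mul_rpow_mul_exp_neg_rpow_div (by linarith) hb s,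
      ← tsum_mul_left]
    refine tsum_congr fun n => ?_
    rw [show (n : ℝ) / (k / 3) = 3 / k * n by field_simp, rpow_add hb, rpow_one,
      rpow_mul hb.le, rpow_natCast, hscale, ← mul_div_right_comm 3]
    field_simp
    ring

/-- **Theorem 3(b) (Laplace transform of the harvested wind power).**
For `a, c > 0`, `k > 3` and `s ≥ 0`,
`(k/(3·a^{k/3}·c^k))·∫₀^∞ e^{−s·p}·p^{k/3−1}·e^{−p^{k/3}/(a^{k/3}·c^k)} dp
  = Σ_{n=0}^∞ ((−s·a·c³)^n/n!)·Γ(3n/k + 1)`,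
where the series converges absolutely. -/
theorem wind_power_laplace_transform
    (a c k s : ℝ) (ha : 0 < a) (hc : 0 < c) (hk : 3 < k) (hs : 0 ≤ s) :
    Summable (fun n : ℕ =>
      |(-(s * a * c ^ 3)) ^ n / (n.factorial : ℝ) * Real.Gamma (3 * n / k + 1)|) ∧
    (k / (3 * a ^ (k / 3) * c ^ k))
        * ∫ p in Set.Ioi (0 : ℝ),
            Real.exp (-(s * p)) * p ^ (k / 3 - 1)
              * Real.exp (-p ^ (k / 3) / (a ^ (k / 3) * c ^ k)) =
      ∑' n : ℕ, (-(s * a * c ^ 3)) ^ n / (n.factorial : ℝ) * Real.Gamma (3 * n / k + 1) :=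
  wind_power_laplace_transform_general a c k s ha hc hk
end

section
/- Let m, Θ, L, P_d, N₀, R_th, T_b > 0 and define the SNR outage objective S(T_f) = γ(m, (2^{T_b·R_th/(T_b − T_f)} − 1)·N₀/(Θ·L·P_d))/Γ(m) for T_f ∈ [0, T_b). Then S is strictly increasing on [0, T_b). Consequently, if H + P_d − (P_hov + γ_d) > 0 and T₀ := (P_d − P_b)·T_b/(H − (P_hov + γ_d) + P_d) satisfies 0 ≤ T₀ < T_b, then the minimizer of S over the feasible set {T_f ∈ [0, T_b) : P_d·(T_b − T_f) + (P_hov + γ_d)·T_f ≤ P_b·T_b + H·T_f} is T_f* = T₀. (Optimal UAV flight time.) -/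
open MeasureTheory Real

/-- The lower incomplete gamma function `γ(s, x) = ∫₀ˣ t^{s−1}·e^{−t} dt`. -/
noncomputable def lowerGamma (s x : ℝ) : ℝ :=
  ∫ t in (0 : ℝ)..x, t ^ (s - 1) * Real.exp (-t)

lemma lowerGamma_integrable {m : ℝ} (hm : 0 < m) (a b : ℝ) :
    IntervalIntegrable (fun t : ℝ => t ^ (m - 1) * Real.exp (-t)) volume a b := by
  exact (intervalIntegral.intervalIntegrable_rpow' (by linarith)).mul_continuousOn
    (Continuous.continuousOn (by continuity))

lemma lowerGamma_strictMonoOn {m : ℝ} (hm : 0 < m) :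
    StrictMonoOn (lowerGamma m) (Set.Ici 0) := by
  intro x hx y _ hxy
  have key : lowerGamma m y - lowerGamma m x
      = ∫ t in x..y, t ^ (m - 1) * Real.exp (-t) :=
    intervalIntegral.integral_interval_sub_left
      (lowerGamma_integrable hm 0 y) (lowerGamma_integrable hm 0 x)
  have hpos : 0 < ∫ t in x..y, t ^ (m - 1) * Real.exp (-t) := by
    apply intervalIntegral.intervalIntegral_pos_of_pos_on
      (lowerGamma_integrable hm x y)
    · intro t ht
      have ht0 : 0 < t := lt_of_le_of_lt hx ht.1
      exact mul_pos (Real.rpow_pos_of_pos ht0 _) (Real.exp_pos _)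
    · exact hxy
  linarith

/-- **Optimal UAV flight time.** The SNR outage objective
`S(T_f) = γ(m, (2^{T_b·R_th/(T_b−T_f)} − 1)·N₀/(Θ·L·P_d))/Γ(m)` is strictly
increasing on `[0, T_b)`; consequently, if `H + P_d − (P_hov + γ_d) > 0` and
`T₀ = (P_d − P_b)·T_b/(H − (P_hov + γ_d) + P_d)` satisfies `0 ≤ T₀ < T_b`, then
`T₀` is the (unique) minimizer of `S` over the feasible set
`{T_f ∈ [0, T_b) : P_d·(T_b − T_f) + (P_hov + γ_d)·T_f ≤ P_b·T_b + H·T_f}`. -/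
theorem optimal_flight_time
    (m Θ L Pd N₀ Rth Tb : ℝ)
    (hm : 0 < m) (hΘ : 0 < Θ) (hL : 0 < L) (hPd : 0 < Pd) (hN₀ : 0 < N₀)
    (hRth : 0 < Rth) (hTb : 0 < Tb)
    (S : ℝ → ℝ)
    (hS : ∀ Tf ∈ Set.Ico (0 : ℝ) Tb,
      S Tf = lowerGamma m
          (((2 : ℝ) ^ (Tb * Rth / (Tb - Tf)) - 1) * N₀ / (Θ * L * Pd)) / Real.Gamma m) :
    StrictMonoOn S (Set.Ico 0 Tb) ∧
    (∀ Pb H Phov γd : ℝ, 0 < H + Pd - (Phov + γd) →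
      0 ≤ (Pd - Pb) * Tb / (H - (Phov + γd) + Pd) →
      (Pd - Pb) * Tb / (H - (Phov + γd) + Pd) < Tb →
      ((Pd - Pb) * Tb / (H - (Phov + γd) + Pd) ∈
        {Tf ∈ Set.Ico (0 : ℝ) Tb |
          Pd * (Tb - Tf) + (Phov + γd) * Tf ≤ Pb * Tb + H * Tf}) ∧
      ∀ Tf ∈ {Tf ∈ Set.Ico (0 : ℝ) Tb |
          Pd * (Tb - Tf) + (Phov + γd) * Tf ≤ Pb * Tb + H * Tf},
        Tf ≠ (Pd - Pb) * Tb / (H - (Phov + γd) + Pd) →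
        S ((Pd - Pb) * Tb / (H - (Phov + γd) + Pd)) < S Tf) := by
  have hD : 0 < Θ * L * Pd := by positivity
  -- the argument map
  set X : ℝ → ℝ := fun Tf => ((2 : ℝ) ^ (Tb * Rth / (Tb - Tf)) - 1) * N₀ / (Θ * L * Pd)
    with hX
  have hXnonneg : ∀ Tf ∈ Set.Ico (0 : ℝ) Tb, 0 ≤ X Tf := by
    intro Tf hTf
    have h1 : (0 : ℝ) < Tb - Tf := by linarith [hTf.2]
    have he : 0 < Tb * Rth / (Tb - Tf) := by positivity
    have h2 : (1 : ℝ) < (2 : ℝ) ^ (Tb * Rth / (Tb - Tf)) :=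
      Real.one_lt_rpow_iff_of_pos two_pos |>.mpr (Or.inl ⟨one_lt_two, he⟩)
    have : 0 ≤ ((2 : ℝ) ^ (Tb * Rth / (Tb - Tf)) - 1) * N₀ := by nlinarith
    exact div_nonneg this hD.le
  have hXmono : ∀ a ∈ Set.Ico (0 : ℝ) Tb, ∀ b ∈ Set.Ico (0 : ℝ) Tb, a < b → X a < X b := by
    intro a ha b hb hab
    have h1 : (0 : ℝ) < Tb - b := by linarith [hb.2]
    have h2 : Tb - b < Tb - a := by linarith
    have hnum : 0 < Tb * Rth := by positivity
    have he : Tb * Rth / (Tb - a) < Tb * Rth / (Tb - b) :=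
      div_lt_div_of_pos_left hnum h1 h2
    have hr : (2 : ℝ) ^ (Tb * Rth / (Tb - a)) < (2 : ℝ) ^ (Tb * Rth / (Tb - b)) :=
      Real.rpow_lt_rpow_left_iff one_lt_two |>.mpr he
    have : ((2 : ℝ) ^ (Tb * Rth / (Tb - a)) - 1) * N₀
        < ((2 : ℝ) ^ (Tb * Rth / (Tb - b)) - 1) * N₀ := by nlinarith
    exact div_lt_div_of_pos_right this hD
  have hΓ : 0 < Real.Gamma m := Real.Gamma_pos_of_pos hm
  have hmono : StrictMonoOn S (Set.Ico 0 Tb) := by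
    intro a ha b hb hab
    rw [hS a ha, hS b hb]
    have := lowerGamma_strictMonoOn hm (hXnonneg a ha) (hXnonneg b hb) (hXmono a ha b hb hab)
    exact div_lt_div_of_pos_right this hΓ
  refine ⟨hmono, ?_⟩
  intro Pb H Phov γd hden hT0 hT0'
  set T0 : ℝ := (Pd - Pb) * Tb / (H - (Phov + γd) + Pd) with hT0def
  have hd : (0 : ℝ) < H - (Phov + γd) + Pd := by linarith
  have h1 : (H - (Phov + γd) + Pd) * T0 = (Pd - Pb) * Tb := by
    rw [hT0def]; field_simp
  constructor
  · refine ⟨⟨hT0, hT0'⟩, ?_⟩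
    nlinarith [h1]
  · rintro Tf ⟨hTfIco, hTfle⟩ hne
    have hge : T0 ≤ Tf := by
      rw [hT0def, div_le_iff₀ hd]
      nlinarith
    have hlt : T0 < Tf := lt_of_le_of_ne hge (Ne.symm hne)
    exact hmono ⟨hT0, hT0'⟩ hTfIco hlt
end
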